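/- Let R be a commutative integral domain of finite character with field of fractions Q, and let Λ be a module-finite R-algebra. Let M, N, K be finitely generated Λ-modules which are torsion-free as R-modules. Assume that (i) M_𝔪 is a direct summand of N_𝔪 (as Λ_𝔪-modules) for all maximal ideals 𝔪 of R, and (ii) M_Q is a direct summand of K_Q (as Λ_Q-modules). Then M is a direct summand of N ⊕ K. -/

import Mathlib

/-!
Clearing denominators turns the splitting over `Q` into `γ : M → K`, `δ : K → M` with
`δ ∘ γ = r` for some `r ≠ 0`, and each local splitting into `f 𝔪 : M → N`, `g 𝔪 : N → M` with
`g 𝔪 ∘ f 𝔪 = s 𝔪 ∉ 𝔪`. Only the finitely many maximal ideals containing `r` matter, and by the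
Chinese remainder theorem their `f 𝔪` glue to one `F` with `g 𝔪 ∘ F ≡ s 𝔪` modulo `𝔪`.
The scalars `t` such that `t • id` factors through `(F, γ) : M → N × K` form an ideal
containing `r`. At a maximal ideal `𝔪 ∋ r` the endomorphism `(g 𝔪, δ) ∘ (F, γ)` is `≡ s 𝔪`
modulo `𝔪`, and Cayley–Hamilton turns this into an element of the ideal outside `𝔪`.
So the ideal is the unit ideal, and `(F, γ)` is a split monomorphism.
-/

open scoped TensorProduct
open Polynomial

universe u

theorem Module.Finite.exists_eq_top_of_directed {A M ι : Type*} [Semiring A] [AddCommMonoid M]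
    [Module A M] [Module.Finite A M] [Nonempty ι] {P : ι → Submodule A M}
    (hdir : Directed (· ≤ ·) P) (hcover : ∀ x, ∃ i, x ∈ P i) : ∃ i, P i = ⊤ := by
  have htop : IsCompactElement (⊤ : Submodule A M) :=
    (Submodule.fg_iff_compact ⊤).mp Module.Finite.fg_top
  obtain ⟨_, ⟨i, rfl⟩, hi⟩ :=
    (CompleteLattice.isCompactElement_iff_le_of_directed_sSup_le _ _).mp htop (Set.range P)
      (Set.range_nonempty P) hdir.directedOn_range fun x _ ↦
        have ⟨i, hi⟩ := hcover x
        Submodule.mem_sSup_of_mem (Set.mem_range_self i) hi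
  exact ⟨i, top_le_iff.mp hi⟩

theorem Polynomial.Monic.eval_notMem_of_coeff_mem {R : Type*} [CommRing R] {p : R[X]}
    (hp : p.Monic) {I : Ideal R} [I.IsPrime] (hcoeff : ∀ k < p.natDegree, p.coeff k ∈ I)
    {x : R} (hx : x ∉ I) : p.eval x ∉ I := by
  rw [eval_eq_sum_range, Finset.sum_range_succ, hp.coeff_natDegree, one_mul]
  intro h
  have hlow : ∑ k ∈ Finset.range p.natDegree, p.coeff k * x ^ k ∈ I :=
    Ideal.sum_mem _ fun k hk ↦ I.mul_mem_right _ (hcoeff k (Finset.mem_range.mp hk))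
  exact hx (‹I.IsPrime›.mem_of_pow_mem _ (by simpa using I.sub_mem h hlow))

theorem Ideal.eq_top_of_mem_of_not_le_maximal {R : Type*} [CommRing R] {I : Ideal R} {r : R}
    (hr : r ∈ I) (h : ∀ 𝔪 : Ideal R, 𝔪.IsMaximal → r ∈ 𝔪 → ¬ I ≤ 𝔪) : I = ⊤ := by
  by_contra hI
  obtain ⟨𝔪, h𝔪, hI𝔪⟩ := Ideal.exists_le_maximal I hI
  exact h 𝔪 h𝔪 (hI𝔪 hr) hI𝔪

section ClearDenominators

variable {R : Type*} [CommRing R] (S : Submonoid R) {M : Type*} [AddCommGroup M] [Module R M]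

instance isLocalizedModule_flip_mk_one :
    IsLocalizedModule S ((TensorProduct.mk R M (Localization S)).flip 1) := by
  have : (TensorProduct.mk R M (Localization S)).flip 1 =
      (TensorProduct.comm R (Localization S) M).toLinearMap ∘ₗ
        TensorProduct.mk R (Localization S) M 1 := by
    ext; rfl
  rw [this]
  infer_instance

theorem tmul_one_injective [Module.IsTorsionFree R M] (hS : S ≤ nonZeroDivisors R) :
    Function.Injective fun x : M ↦ x ⊗ₜ[R] (1 : Localization S) :=
  (IsLocalizedModule.injective_iff_isRegular S ((TensorProduct.mk R M _).flip 1)).mpr fun c ↦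
    (isRegular_iff_mem_nonZeroDivisors.mpr (hS c.2)).isSMulRegular

theorem exists_smul_eq_tmul_one (z : M ⊗[R] Localization S) :
    ∃ s ∈ S, ∃ x : M, s • z = x ⊗ₜ 1 := by
  obtain ⟨⟨x, s⟩, hs⟩ :=
    IsLocalizedModule.surj S ((TensorProduct.mk R M (Localization S)).flip 1) z
  exact ⟨s, s.2, x, hs⟩

variable {Λ : Type*} [Ring Λ] [Algebra R Λ] [Module Λ M] [IsScalarTower R Λ M]
  {K : Type*} [AddCommGroup K] [Module R K] [Module Λ K] [IsScalarTower R Λ K]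

noncomputable def tmulOne : M →ₗ[Λ] M ⊗[R] Localization S :=
  (TensorProduct.AlgebraTensorModule.mk R Λ M (Localization S)).flip 1

theorem exists_tmul_one_eq_smul [Module.Finite Λ M] [Module.IsTorsionFree R K]
    (hS : S ≤ nonZeroDivisors R) (F : M ⊗[R] Localization S →ₗ[Λ] K ⊗[R] Localization S) :
    ∃ φ : M →ₗ[Λ] K, ∃ s ∈ S, ∀ x, φ x ⊗ₜ 1 = s • F (x ⊗ₜ 1) := by
  let P : S → Submodule Λ M := fun s ↦
    (LinearMap.range (tmulOne S)).comap ((s : R) • F ∘ₗ tmulOne S)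
  have hmono (s t : S) : P s ≤ P (t * s) := by
    rintro x ⟨k, hk⟩
    refine ⟨(t : R) • k, ?_⟩
    simp only [LinearMap.map_smul_of_tower, hk, LinearMap.smul_apply, Submonoid.coe_mul,
      mul_smul]
  have hcover (x : M) : ∃ s, x ∈ P s := by
    obtain ⟨s, hs, k, hk⟩ := exists_smul_eq_tmul_one S (F (x ⊗ₜ 1))
    exact ⟨⟨s, hs⟩, k, hk.symm⟩
  obtain ⟨s, hs⟩ := Module.Finite.exists_eq_top_of_directed
    (fun s t ↦ ⟨t * s, hmono s t, mul_comm t s ▸ hmono t s⟩) hcover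
  let ι := LinearEquiv.ofInjective (tmulOne S : K →ₗ[Λ] _) (tmul_one_injective S hS)
  refine ⟨ι.symm.toLinearMap ∘ₗ
      ((s : R) • F ∘ₗ tmulOne S).codRestrict _ fun x ↦ hs.ge Submodule.mem_top, s, s.2, fun x ↦ ?_⟩
  exact congrArg Subtype.val (ι.apply_symm_apply _)

theorem exists_comp_eq_smul_id_of_localization [Module.Finite Λ M] [Module.Finite Λ K]
    [Module.IsTorsionFree R M] [Module.IsTorsionFree R K] (hS : S ≤ nonZeroDivisors R)
    {F : M ⊗[R] Localization S →ₗ[Λ] K ⊗[R] Localization S}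
    {G : K ⊗[R] Localization S →ₗ[Λ] M ⊗[R] Localization S} (hGF : G ∘ₗ F = LinearMap.id) :
    ∃ (γ : M →ₗ[Λ] K) (δ : K →ₗ[Λ] M), ∃ s ∈ S, δ ∘ₗ γ = s • LinearMap.id := by
  obtain ⟨γ, a, ha, hγ⟩ := exists_tmul_one_eq_smul S hS F
  obtain ⟨δ, b, hb, hδ⟩ := exists_tmul_one_eq_smul S hS G
  refine ⟨γ, δ, b * a, S.mul_mem hb ha, LinearMap.ext fun x ↦ tmul_one_injective S hS ?_⟩
  calc δ (γ x) ⊗ₜ 1 = b • G (γ x ⊗ₜ 1) := hδ _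
    _ = (b * a) • G (F (x ⊗ₜ 1)) := by rw [hγ, LinearMap.map_smul_of_tower, mul_smul]
    _ = ((b * a) • x) ⊗ₜ 1 := by rw [← LinearMap.comp_apply G F, hGF]; rfl

end ClearDenominators

section SplittingIdeal

variable {R : Type*} [CommRing R] {Λ : Type*} [Ring Λ] [Algebra R Λ]
  {M : Type*} [AddCommGroup M] [Module R M] [Module Λ M] [IsScalarTower R Λ M]
  {P : Type*} [AddCommGroup P] [Module Λ P]

variable (R) in
def splittingIdeal (φ : M →ₗ[Λ] P) : Ideal R :=
  (LinearMap.range (LinearMap.lcomp R M φ)).comap (LinearMap.toSpanSingleton R _ LinearMap.id)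

theorem mem_splittingIdeal {φ : M →ₗ[Λ] P} {t : R} :
    t ∈ splittingIdeal R φ ↔ ∃ ψ : P →ₗ[Λ] M, ψ ∘ₗ φ = t • LinearMap.id := Iff.rfl

variable (R Λ M) in
def Module.End.restrictScalarsAlgHom : Module.End Λ M →ₐ[R] Module.End R M where
  toFun := LinearMap.restrictScalars R
  map_one' := rfl
  map_mul' _ _ := rfl
  map_zero' := rfl
  map_add' _ _ := rfl
  commutes' _ := rfl

theorem Module.End.exists_mul_eq_smul_one_of_sub_smul_mem [Module.Finite R M] {I : Ideal R}
    [I.IsPrime] {u : Module.End Λ M} {c : R} (hc : c ∉ I)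
    (hu : u - c • 1 ∈ I • (⊤ : Submodule R (Module.End Λ M))) :
    ∃ v : Module.End Λ M, ∃ t ∉ I, v * u = t • 1 := by
  let ρ := Module.End.restrictScalarsAlgHom R Λ M
  have hrange : LinearMap.range (ρ (u - c • 1)) ≤ I • ⊤ := by
    rintro _ ⟨x, rfl⟩
    exact Submodule.smul_induction_on hu (fun a ha w _ ↦ Submodule.smul_mem_smul ha trivial)
      fun _ _ ↦ Submodule.add_mem _
  obtain ⟨p, hmonic, -, hcoeff, hp⟩ :=
    LinearMap.exists_monic_and_natDegree_eq_and_coeff_mem_pow_and_aeval_eq_zero R _ I hrange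
  have hp : aeval (u - c • 1) p = 0 :=
    LinearMap.restrictScalars_injective R (by rwa [aeval_algHom_apply ρ] at hp)
  -- `q(X) = p(X - c)` kills `u`, so `u` divides its constant term `p(-c)`, which is
  -- `(-c) ^ p.natDegree` modulo `I` since the lower coefficients of `p` lie in `I`.
  set q := p.comp (X - C c)
  have hq : aeval u q = 0 := by
    rw [aeval_comp]
    simpa [Algebra.algebraMap_eq_smul_one] using hp
  refine ⟨-aeval u q.divX, q.coeff 0, ?_, ?_⟩
  · rw [coeff_zero_eq_eval_zero, eval_comp]
    refine hmonic.eval_notMem_of_coeff_mem (fun k hk ↦ ?_) (by simpa using hc)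
    exact Ideal.pow_le_self (Nat.sub_ne_zero_of_lt hk) (hcoeff k)
  · have := congrArg (aeval u) q.divX_mul_X_add
    rw [map_add, map_mul, aeval_X, aeval_C, hq, Algebra.algebraMap_eq_smul_one] at this
    rw [neg_mul, neg_eq_iff_eq_neg, eq_neg_iff_add_eq_zero, this]

theorem splittingIdeal_not_le [Module.Finite R M] {I : Ideal R} [I.IsPrime] {φ : M →ₗ[Λ] P}
    (ψ : P →ₗ[Λ] M) {c : R} (hc : c ∉ I)
    (h : ψ ∘ₗ φ - c • LinearMap.id ∈ I • (⊤ : Submodule R (Module.End Λ M))) :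
    ¬ splittingIdeal R φ ≤ I := by
  obtain ⟨v, t, ht, hv⟩ := Module.End.exists_mul_eq_smul_one_of_sub_smul_mem hc h
  exact fun hle ↦ ht (hle (mem_splittingIdeal.mpr ⟨v ∘ₗ ψ, hv⟩))

end SplittingIdeal

theorem exists_comp_sub_smul_mem_of_pairwise_isCoprime {R : Type*} [CommRing R]
    {Λ : Type*} [Ring Λ] [Algebra R Λ]
    {M : Type*} [AddCommGroup M] [Module R M] [Module Λ M] [IsScalarTower R Λ M]
    {N : Type*} [AddCommGroup N] [Module R N] [Module Λ N] [IsScalarTower R Λ N]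
    {ι : Type*} [Finite ι] {I : ι → Ideal R} (hI : Pairwise (Function.onFun IsCoprime I))
    (f : ι → M →ₗ[Λ] N) (g : ι → N →ₗ[Λ] M) {s : ι → R}
    (hgf : ∀ i, g i ∘ₗ f i = s i • LinearMap.id) :
    ∃ F : M →ₗ[Λ] N, ∀ i,
      g i ∘ₗ F - s i • LinearMap.id ∈ I i • (⊤ : Submodule R (Module.End Λ M)) := by
  classical
  have := Fintype.ofFinite ι
  choose e he using fun j ↦ Ideal.exists_forall_sub_mem_ideal hI (Pi.single j 1)
  refine ⟨∑ j, e j • f j, fun i ↦ ?_⟩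
  have : g i ∘ₗ (∑ j, e j • f j) - s i • LinearMap.id =
      ∑ j, (e j - (Pi.single j 1 : ι → R) i) • (g i ∘ₗ f j) := by
    ext x
    simp [sub_smul, Finset.sum_sub_distrib, Pi.single_apply, LinearMap.congr_fun (hgf i) x]
  rw [this]
  exact Submodule.sum_mem _ fun j _ ↦ Submodule.smul_mem_smul (he j i) trivial

/-- Let `R` be a domain of finite character with fraction field `Q`, and
`Λ` a module-finite `R`-algebra.  Let `M`, `N`, `K` be finitely generated `Λ`-modules,
torsion-free over `R`.  If `M_𝔪` is a direct summand of `N_𝔪` for all maximal ideals `𝔪`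
and `M_Q` is a direct summand of `K_Q`, then `M` is a direct summand of `N ⊕ K`. -/
theorem stmt8 (R : Type u) [CommRing R] [IsDomain R]
    (hfc : ∀ r : R, r ≠ 0 → {𝔪 : MaximalSpectrum R | r ∈ 𝔪.asIdeal}.Finite)
    (Λ : Type u) [Ring Λ] [Algebra R Λ] [Module.Finite R Λ]
    (M : Type u) [AddCommGroup M] [Module R M] [Module Λ M] [IsScalarTower R Λ M]
    [Module.Finite Λ M] [NoZeroSMulDivisors R M]
    (N : Type u) [AddCommGroup N] [Module R N] [Module Λ N] [IsScalarTower R Λ N]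
    [Module.Finite Λ N] [NoZeroSMulDivisors R N]
    (K : Type u) [AddCommGroup K] [Module R K] [Module Λ K] [IsScalarTower R Λ K]
    [Module.Finite Λ K] [NoZeroSMulDivisors R K]
    (hloc : ∀ (𝔪 : Ideal R) (h𝔪 : 𝔪.IsMaximal),
      ∃ (f : (M ⊗[R] Localization.AtPrime 𝔪) →ₗ[Λ] (N ⊗[R] Localization.AtPrime 𝔪))
        (g : (N ⊗[R] Localization.AtPrime 𝔪) →ₗ[Λ] (M ⊗[R] Localization.AtPrime 𝔪)),
        g.comp f = LinearMap.id)
    (hQ : ∃ (f : (M ⊗[R] FractionRing R) →ₗ[Λ] (K ⊗[R] FractionRing R))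
        (g : (K ⊗[R] FractionRing R) →ₗ[Λ] (M ⊗[R] FractionRing R)),
        g.comp f = LinearMap.id) :
    ∃ (f : M →ₗ[Λ] N × K) (g : N × K →ₗ[Λ] M), g.comp f = LinearMap.id := by
  have : Module.Finite R M := Module.Finite.trans Λ M
  obtain ⟨_, _, hQ⟩ := hQ
  obtain ⟨γ, δ, r, hr, hδγ⟩ := exists_comp_eq_smul_id_of_localization (nonZeroDivisors R) le_rfl hQ
  have : Finite {𝔪 : MaximalSpectrum R | r ∈ 𝔪.asIdeal} :=
    (hfc r (nonZeroDivisors.ne_zero hr)).to_subtype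
  choose f g s hs hgf using fun 𝔪 : {𝔪 : MaximalSpectrum R | r ∈ 𝔪.asIdeal} ↦
    (hloc 𝔪.1.asIdeal 𝔪.1.isMaximal).elim fun _ ⟨_, h⟩ ↦
      exists_comp_eq_smul_id_of_localization _ (Ideal.primeCompl_le_nonZeroDivisors _) h
  obtain ⟨F, hF⟩ := exists_comp_sub_smul_mem_of_pairwise_isCoprime
    (fun _ _ h ↦ MaximalSpectrum.isCoprime_of_ne (Subtype.coe_ne_coe.mpr h)) f g hgf
  have htop : splittingIdeal R (F.prod γ) = ⊤ := by
    refine Ideal.eq_top_of_mem_of_not_le_maximal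
      (mem_splittingIdeal.mpr ⟨δ ∘ₗ LinearMap.snd Λ N K, hδγ⟩) fun 𝔪 h𝔪 hr𝔪 ↦ ?_
    let i : {𝔪 : MaximalSpectrum R | r ∈ 𝔪.asIdeal} := ⟨⟨𝔪, h𝔪⟩, hr𝔪⟩
    refine splittingIdeal_not_le ((g i).coprod δ) (hs i) ?_
    rw [LinearMap.coprod_comp_prod, hδγ, add_sub_right_comm]
    exact add_mem (hF i) (Submodule.smul_mem_smul hr𝔪 trivial)
  obtain ⟨ψ, hψ⟩ := mem_splittingIdeal.mp (htop ▸ Submodule.mem_top : (1 : R) ∈ _)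
  exact ⟨F.prod γ, ψ, by rw [hψ, one_smul]⟩
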